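/- arXiv:math/9906162 — 6 statements merged into one kernel-verified Lean document; each statement's English description precedes it below -/
import Mathlib

section
/- If Y is a Z-set in a compact metric space X, then for each positive integer n, the n-th symmetric product F_n(Y) is a Z-set in F_n(X). -/
open Metric TopologicalSpace Set Filter unitInterval

/-- The n-th symmetric product: nonempty subsets with at most n points,
as a subspace of the nonempty compact subsets with the Hausdorff metric. -/
abbrev SymProd (X : Type*) [MetricSpace X] (n : ℕ) :=
  {A : NonemptyCompacts X // (A : Set X).Finite ∧ (A : Set X).ncard ≤ n}

/-- A Z-set in a metric space. -/
def IsZSet {Y : Type*} [MetricSpace Y] (A : Set Y) : Prop :=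
  IsClosed A ∧ ∀ ε > 0, ∃ f : Y → Y, Continuous f ∧ (∀ y, f y ∉ A) ∧ ∀ y, dist y (f y) < ε

/-- A Z-map: a continuous map whose image is a Z-set. -/
def IsZMap {X Y : Type*} [MetricSpace X] [MetricSpace Y] (f : X → Y) : Prop :=
  Continuous f ∧ IsZSet (Set.range f)

theorem stmt0 {X : Type*} [MetricSpace X] [CompactSpace X] (Y : Set X)
    (hY : IsZSet Y) (n : ℕ) (hn : 0 < n) :
    IsZSet {A : SymProd X n | (A.1 : Set X) ⊆ Y} := by
  obtain ⟨hYc, hYz⟩ := hY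
  constructor
  · -- closedness
    have h2 : IsClosed {A : NonemptyCompacts X | (A : Set X) ⊆ Y} := by
      refine isClosed_of_closure_subset fun A hA x hx => ?_
      have : x ∈ closure Y := by
        refine EMetric.mem_closure_iff.2 fun ε εpos => ?_
        obtain ⟨B, hB, hAB⟩ := EMetric.mem_closure_iff.1 hA ε εpos
        obtain ⟨y, hy, hxy⟩ := EMetric.exists_edist_lt_of_hausdorffEdist_lt hx hAB
        exact ⟨y, hB hy, hxy⟩
      rwa [hYc.closure_eq] at this
    exact h2.preimage continuous_subtype_val
  · intro ε hε
    obtain ⟨f, hf, hfY, hfd⟩ := hYz ε hε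
    have hbd : ∀ s : Set X, Bornology.IsBounded s := fun s =>
      (isCompact_univ.isBounded).subset (subset_univ _)
    have hne_top : ∀ (s t : Set X), s.Nonempty → t.Nonempty →
        EMetric.hausdorffEdist s t ≠ ⊤ := fun s t hs ht =>
      Metric.hausdorffEdist_ne_top_of_nonempty_of_bounded hs ht (hbd s) (hbd t)
    -- the induced map on SymProd
    refine ⟨fun A => ⟨⟨⟨f '' A.1, A.1.isCompact.image hf⟩, A.1.nonempty.image f⟩,
      A.2.1.image f, le_trans (Set.ncard_image_le A.2.1) A.2.2⟩, ?_, ?_, ?_⟩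
    · -- continuity
      have huc : UniformContinuous f := CompactSpace.uniformContinuous_of_continuous hf
      rw [Metric.continuous_iff]
      intro A δ hδ
      obtain ⟨η, hη, hηd⟩ := Metric.uniformContinuous_iff.1 huc (δ/2) (by positivity)
      refine ⟨η, hη, fun B hAB => ?_⟩
      have hAB' : hausdorffDist (B.1 : Set X) (A.1 : Set X) < η := by
        rwa [Subtype.dist_eq, NonemptyCompacts.dist_eq] at hAB
      have key : hausdorffDist (f '' (B.1 : Set X)) (f '' (A.1 : Set X)) ≤ δ/2 := by
        apply Metric.hausdorffDist_le_of_mem_dist (by positivity)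
        · rintro _ ⟨b, hb, rfl⟩
          obtain ⟨a, ha, hd⟩ := Metric.exists_dist_lt_of_hausdorffDist_lt hb hAB'
            (hne_top _ _ B.1.nonempty A.1.nonempty)
          exact ⟨f a, Set.mem_image_of_mem f ha, le_of_lt (hηd hd)⟩
        · rintro _ ⟨a, ha, rfl⟩
          obtain ⟨b, hb, hd⟩ := Metric.exists_dist_lt_of_hausdorffDist_lt' ha hAB'
            (hne_top _ _ B.1.nonempty A.1.nonempty)
          exact ⟨f b, Set.mem_image_of_mem f hb, le_of_lt (hηd (dist_comm b a ▸ hd))⟩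
      rw [Subtype.dist_eq, NonemptyCompacts.dist_eq]
      exact lt_of_le_of_lt key (by linarith)
    · -- avoids the Z-set
      intro A hA
      obtain ⟨a, ha⟩ := A.1.nonempty
      exact hfY a (hA (Set.mem_image_of_mem f ha))
    · -- distance bound
      intro A
      -- max of a ↦ dist a (f a) over the compact set A
      obtain ⟨a₀, ha₀, hmax⟩ := A.1.isCompact.exists_isMaxOn A.1.nonempty
        ((continuous_id.dist hf).continuousOn)
      have hm : dist a₀ (f a₀) < ε := hfd a₀
      rw [Subtype.dist_eq, NonemptyCompacts.dist_eq]
      refine lt_of_le_of_lt (Metric.hausdorffDist_le_of_mem_dist dist_nonneg ?_ ?_) hm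
      · intro x hx
        exact ⟨f x, Set.mem_image_of_mem f hx, hmax hx⟩
      · rintro _ ⟨x, hx, rfl⟩
        exact ⟨x, hx, (dist_comm (f x) x ▸ hmax hx : dist (f x) x ≤ _)⟩
end

section
/- If X is a contractible continuum, then F_n(X) is contractible for each positive integer n. -/
open Metric TopologicalSpace Set Filter unitInterval

namespace SymProd

variable {X Y : Type*} [MetricSpace X] [MetricSpace Y] {n : ℕ}

def map (f : C(X, Y)) : C(SymProd X n, SymProd Y n) where
  toFun A := ⟨A.1.map f f.continuous, A.2.1.image f, (ncard_image_le A.2.1).trans A.2.2⟩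
  continuous_toFun :=
    (f.continuous.nonemptyCompacts_map.comp continuous_subtype_val).subtype_mk _

def mapHomotopy {f g : C(X, Y)} (H : f.Homotopy g) :
    (map f : C(SymProd X n, SymProd Y n)).Homotopy (map g) where
  toFun p := ⟨p.2.1.map (H.curry p.1) (H.curry p.1).continuous,
    p.2.2.1.image _, (ncard_image_le p.2.2.1).trans p.2.2.2⟩
  -- The Hausdorff metric on `NonemptyCompacts` induces the Vietoris topology, in which
  -- images under a jointly continuous family of maps depend continuously on the parameters.
  continuous_toFun :=
    ((continuous_subtype_val.comp continuous_snd).nonemptyCompacts_map'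
      (g := fun p x => H (p.1, x)) (by fun_prop)).subtype_mk _
  map_zero_left A := by ext; simp [map]
  map_one_left A := by ext; simp [map]

theorem map_id : map (ContinuousMap.id X) = ContinuousMap.id (SymProd X n) := by
  ext; simp [map]

def singleton (hn : 0 < n) (x : X) : SymProd X n :=
  ⟨{x}, finite_singleton x, by simpa using Nat.one_le_of_lt hn⟩

theorem map_const (hn : 0 < n) (y : Y) :
    map (ContinuousMap.const X y) = ContinuousMap.const (SymProd X n) (singleton hn y) := by
  ext A : 3
  exact A.1.nonempty.image_const y

end SymProd

theorem stmt2_general {X : Type*} [MetricSpace X]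
    (hX : ContractibleSpace X) (n : ℕ) (hn : 0 < n) :
    ContractibleSpace (SymProd X n) := by
  obtain ⟨c, ⟨H⟩⟩ := (contractible_iff_id_nullhomotopic X).1 hX
  refine (contractible_iff_id_nullhomotopic _).2 ⟨SymProd.singleton hn c, ⟨?_⟩⟩
  rw [← SymProd.map_id, ← SymProd.map_const hn]
  exact SymProd.mapHomotopy H

theorem stmt2 {X : Type*} [MetricSpace X] [CompactSpace X] [ConnectedSpace X] [Nonempty X]
    (hX : ContractibleSpace X) (n : ℕ) (hn : 0 < n) :
    ContractibleSpace (SymProd X n) :=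
  stmt2_general hX n hn
end

section
/- Let X = Q₁ ∪ Q₂ where Q₁, Q₂ are Hilbert cubes meeting in exactly one point p, and let 𝒦 = {{x₁,x₂} ∈ F_2(X) : x₁ ∈ Q₁, x₂ ∈ Q₂}. Then the map f : Q₁ × Q₂ → 𝒦 given by f(x₁,x₂) = {x₁,x₂} is a homeomorphism; in particular 𝒦 is homeomorphic to the Hilbert cube. -/
open Metric TopologicalSpace Set Filter unitInterval

/-!
The map `(x₁, x₂) ↦ {x₁, x₂}` is 1-Lipschitz for the Hausdorff metric, hence continuous. It is
injective because a point lying in both cubes must be `p`: if `{x₁, x₂} = {y₂, y₁}` crosswise then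
`x₁, x₂` both lie in `Q₁ ∩ Q₂`, so all four points coincide. A continuous bijection from the
compact space `Q₁ × Q₂` onto the metric space `𝒦 = pairsAcross Q₁ Q₂` is a homeomorphism, and
`Q × Q ≃ₜ Q` for the Hilbert cube `Q = I^ℕ` because `ℕ ⊕ ℕ ≃ ℕ`.
-/

noncomputable def Homeomorph.natArrowProdSelf (Y : Type*) [TopologicalSpace Y] :
    (ℕ → Y) × (ℕ → Y) ≃ₜ (ℕ → Y) :=
  Homeomorph.sumArrowHomeomorphProdArrow.symm.trans
    (Homeomorph.piCongrLeft (Y := fun _ ↦ Y) Equiv.natSumNatEquivNat)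

theorem Set.eq_and_eq_of_pair_eq_pair {X : Type*} {Q₁ Q₂ : Set X}
    (hQ : (Q₁ ∩ Q₂).Subsingleton) {x₁ y₁ x₂ y₂ : X}
    (hx₁ : x₁ ∈ Q₁) (hy₁ : y₁ ∈ Q₁) (hx₂ : x₂ ∈ Q₂) (hy₂ : y₂ ∈ Q₂)
    (h : ({x₁, x₂} : Set X) = {y₁, y₂}) : x₁ = y₁ ∧ x₂ = y₂ := by
  rcases Set.pair_eq_pair_iff.mp h with same | ⟨rfl, rfl⟩
  · exact same
  · have : x₁ = x₂ := hQ ⟨hx₁, hy₂⟩ ⟨hy₁, hx₂⟩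
    exact ⟨this, this.symm⟩

section Pairs

variable {X : Type*} [MetricSpace X]

def SymProd.pair (x y : X) : SymProd X 2 :=
  ⟨{x} ⊔ {y}, (Set.finite_singleton y).insert x, (Set.ncard_insert_le x {y}).trans (by simp)⟩

theorem SymProd.continuous_pair : Continuous fun z : X × X ↦ SymProd.pair z.1 z.2 :=
  (NonemptyCompacts.lipschitz_sup.continuous.comp
    (NonemptyCompacts.isometry_singleton.continuous.prodMap
      NonemptyCompacts.isometry_singleton.continuous)).subtype_mk _

def pairsAcross (Q₁ Q₂ : Set X) : Set (SymProd X 2) :=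
  {A | ∃ x₁ ∈ Q₁, ∃ x₂ ∈ Q₂, (A.1 : Set X) = {x₁, x₂}}

variable {Q₁ Q₂ : Set X}

def pairsAcrossMap (a : Q₁ × Q₂) : pairsAcross Q₁ Q₂ :=
  ⟨SymProd.pair a.1 a.2, a.1, a.1.2, a.2, a.2.2, rfl⟩

theorem continuous_pairsAcrossMap : Continuous (pairsAcrossMap (Q₁ := Q₁) (Q₂ := Q₂)) :=
  (SymProd.continuous_pair.comp
    (continuous_subtype_val.prodMap continuous_subtype_val)).subtype_mk _

theorem bijective_pairsAcrossMap (hQ : (Q₁ ∩ Q₂).Subsingleton) :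
    Function.Bijective (pairsAcrossMap (Q₁ := Q₁) (Q₂ := Q₂)) := by
  constructor
  · rintro ⟨x₁, x₂⟩ ⟨y₁, y₂⟩ h
    have hpair : ({(x₁ : X), (x₂ : X)} : Set X) = {(y₁ : X), (y₂ : X)} :=
      congrArg (fun A : pairsAcross Q₁ Q₂ ↦ (A.1.1 : Set X)) h
    obtain ⟨h₁, h₂⟩ := Set.eq_and_eq_of_pair_eq_pair hQ x₁.2 y₁.2 x₂.2 y₂.2 hpair
    exact Prod.ext (Subtype.ext h₁) (Subtype.ext h₂)
  · rintro ⟨A, x₁, hx₁, x₂, hx₂, hA⟩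
    exact ⟨(⟨x₁, hx₁⟩, ⟨x₂, hx₂⟩), Subtype.ext (Subtype.ext (NonemptyCompacts.ext hA.symm))⟩

noncomputable def pairsAcrossHomeomorph [CompactSpace Q₁] [CompactSpace Q₂]
    (hQ : (Q₁ ∩ Q₂).Subsingleton) : Q₁ × Q₂ ≃ₜ pairsAcross Q₁ Q₂ :=
  Continuous.homeoOfEquivCompactToT2 (f := Equiv.ofBijective _ (bijective_pairsAcrossMap hQ))
    continuous_pairsAcrossMap

end Pairs

theorem stmt8_general {X : Type*} [MetricSpace X] (Q₁ Q₂ : Set X) (p : X)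
    (hQ₁ : Nonempty (Q₁ ≃ₜ (ℕ → I))) (hQ₂ : Nonempty (Q₂ ≃ₜ (ℕ → I)))
    (hinter : Q₁ ∩ Q₂ = {p}) :
    (∃ F : (Q₁ × Q₂) ≃ₜ {A : SymProd X 2 // ∃ x₁ ∈ Q₁, ∃ x₂ ∈ Q₂, (A.1 : Set X) = {x₁, x₂}},
        ∀ a : Q₁ × Q₂, (((F a : {A : SymProd X 2 // ∃ x₁ ∈ Q₁, ∃ x₂ ∈ Q₂,
          (A.1 : Set X) = {x₁, x₂}}) : SymProd X 2).1 : Set X) = {(a.1 : X), (a.2 : X)}) ∧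
    Nonempty ({A : SymProd X 2 // ∃ x₁ ∈ Q₁, ∃ x₂ ∈ Q₂, (A.1 : Set X) = {x₁, x₂}}
      ≃ₜ (ℕ → I)) := by
  obtain ⟨e₁⟩ := hQ₁
  obtain ⟨e₂⟩ := hQ₂
  have : CompactSpace Q₁ := e₁.symm.compactSpace
  have : CompactSpace Q₂ := e₂.symm.compactSpace
  let F := pairsAcrossHomeomorph (hinter ▸ Set.subsingleton_singleton)
  exact ⟨⟨F, fun _ ↦ rfl⟩,
    ⟨F.symm.trans ((e₁.prodCongr e₂).trans (Homeomorph.natArrowProdSelf I))⟩⟩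

theorem stmt8 {X : Type*} [MetricSpace X] (Q₁ Q₂ : Set X) (p : X)
    (hQ₁ : Nonempty (Q₁ ≃ₜ (ℕ → I))) (hQ₂ : Nonempty (Q₂ ≃ₜ (ℕ → I)))
    (hunion : Q₁ ∪ Q₂ = Set.univ) (hinter : Q₁ ∩ Q₂ = {p}) :
    (∃ F : (Q₁ × Q₂) ≃ₜ {A : SymProd X 2 // ∃ x₁ ∈ Q₁, ∃ x₂ ∈ Q₂, (A.1 : Set X) = {x₁, x₂}},
        ∀ a : Q₁ × Q₂, (((F a : {A : SymProd X 2 // ∃ x₁ ∈ Q₁, ∃ x₂ ∈ Q₂,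
          (A.1 : Set X) = {x₁, x₂}}) : SymProd X 2).1 : Set X) = {(a.1 : X), (a.2 : X)}) ∧
    Nonempty ({A : SymProd X 2 // ∃ x₁ ∈ Q₁, ∃ x₂ ∈ Q₂, (A.1 : Set X) = {x₁, x₂}}
      ≃ₜ (ℕ → I)) :=
  stmt8_general Q₁ Q₂ p hQ₁ hQ₂ hinter
end

section
/- Let Q₁ = ∏_{k=1}^∞ [0,1] be the Hilbert cube, p = (1,1,1,…), and for t ∈ (0,1) define h_t : F_2(Q₁) → F_2(Q₁) by h_t({x,x'}) = {t·x, t·x'} (coordinatewise scalar multiplication). Then h_t is continuous, its image is disjoint from the set {{x,p} : x ∈ Q₁}, and h_t moves each point of F_2(Q₁) by less than 1−t in the Hausdorff metric. Consequently, {{x,p} : x ∈ Q₁} is a Z-set in F_2(Q₁). -/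
open Metric TopologicalSpace Set Filter unitInterval

section aux
variable [m : MetricSpace (ℕ → I)]

lemma aux_summable (c : ℕ → ℝ) (hc : ∀ j, |c j| ≤ 1) :
    Summable (fun j => (2:ℝ)⁻¹ ^ (j+1) * c j) := by
  have hg : Summable (fun j : ℕ => (2:ℝ)⁻¹ ^ (j+1)) := by
    simpa [pow_succ'] using (summable_geometric_of_lt_one (by norm_num) (by norm_num :
      (2:ℝ)⁻¹ < 1)).mul_left (2:ℝ)⁻¹
  refine Summable.of_abs (hg.of_nonneg_of_le (fun j => abs_nonneg _) (fun j => ?_))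
  rw [abs_mul, abs_pow]
  calc |(2:ℝ)⁻¹| ^ (j+1) * |c j| ≤ |(2:ℝ)⁻¹| ^ (j+1) * 1 :=
        mul_le_mul_of_nonneg_left (hc j) (by positivity)
    _ = (2:ℝ)⁻¹ ^ (j+1) := by rw [mul_one, abs_of_nonneg]; norm_num

lemma aux_tsum_geom : ∑' j : ℕ, (2:ℝ)⁻¹ ^ (j+1) = 1 := by
  have := tsum_geometric_of_lt_one (by norm_num : (0:ℝ) ≤ 2⁻¹) (by norm_num : (2:ℝ)⁻¹ < 1)
  calc ∑' j : ℕ, (2:ℝ)⁻¹ ^ (j+1) = ∑' j : ℕ, (2:ℝ)⁻¹ * (2:ℝ)⁻¹ ^ j := by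
        simp [pow_succ', mul_comm]
    _ = (2:ℝ)⁻¹ * ∑' j : ℕ, (2:ℝ)⁻¹ ^ j := tsum_mul_left
    _ = 1 := by rw [this]; norm_num

lemma aux_bound (j : ℕ) (x y : ℕ → I) : |(x j : ℝ) - (y j : ℝ)| ≤ 1 := by
  have h1 := (x j).2; have h2 := (y j).2
  rw [abs_sub_le_iff]
  constructor <;> simp only [Set.mem_Icc] at h1 h2 <;> linarith

variable (hm : ∀ x y : ℕ → I, dist x y = ∑' j, (2:ℝ)⁻¹ ^ (j+1) * |(x j : ℝ) - (y j : ℝ)|)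
include hm

lemma aux_lip (t : I) : LipschitzWith 1 (fun (x : ℕ → I) j => t * x j) := by
  refine LipschitzWith.of_dist_le_mul fun x y => ?_
  rw [NNReal.coe_one, one_mul, hm, hm]
  refine Summable.tsum_le_tsum (fun j => ?_)
    (aux_summable _ fun j => by rw [abs_abs]; exact aux_bound j (fun k => t * x k) (fun k => t * y k))
    (aux_summable _ fun j => by rw [abs_abs]; exact aux_bound j x y)
  have : |((t * x j : I) : ℝ) - ((t * y j : I) : ℝ)| = (t:ℝ) * |(x j : ℝ) - (y j : ℝ)| := by
    rw [Set.Icc.coe_mul, Set.Icc.coe_mul, ← mul_sub, abs_mul, abs_of_nonneg t.2.1]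
  rw [this]
  refine mul_le_mul_of_nonneg_left ?_ (le_of_lt (pow_pos (by norm_num) (j+1)))
  nlinarith [abs_nonneg ((x j : ℝ) - (y j : ℝ)), t.2.1, t.2.2]

lemma aux_move (t : I) (x : ℕ → I) : dist (fun j => t * x j) x ≤ 1 - (t:ℝ) := by
  rw [hm]
  have key : ∀ j, (2:ℝ)⁻¹ ^ (j+1) * |((t * x j : I) : ℝ) - (x j : ℝ)| ≤
      (2:ℝ)⁻¹ ^ (j+1) * (1 - (t:ℝ)) := by
    intro j
    have : |((t * x j : I) : ℝ) - (x j : ℝ)| = (1 - (t:ℝ)) * (x j : ℝ) := by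
      rw [Set.Icc.coe_mul, abs_of_nonpos (by nlinarith [(x j).2.1, (x j).2.2, t.2.2])]
      ring
    rw [this]
    refine mul_le_mul_of_nonneg_left ?_ (le_of_lt (pow_pos (by norm_num) (j+1)))
    nlinarith [(x j).2.1, (x j).2.2, t.2.2]
  calc (∑' j, (2:ℝ)⁻¹ ^ (j+1) * |((t * x j : I) : ℝ) - (x j : ℝ)|)
      ≤ ∑' j, (2:ℝ)⁻¹ ^ (j+1) * (1 - (t:ℝ)) := by
        refine Summable.tsum_le_tsum key
          (aux_summable _ fun j => by rw [abs_abs]; exact aux_bound j (fun k => t * x k) x)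
          (aux_summable (fun _ => 1 - (t:ℝ)) fun j => ?_)
        rw [abs_of_nonneg (by nlinarith [t.2.2] : (0:ℝ) ≤ 1 - (t:ℝ))]
        nlinarith [t.2.1]
    _ = 1 - (t:ℝ) := by rw [tsum_mul_right, aux_tsum_geom, one_mul]
end aux

section aux2
variable {X : Type*} [MetricSpace X] (sc : X → X)

/-- The image of a symmetric-product element under a map. -/
def mapSP (A : SymProd X 2) : SymProd X 2 :=
  ⟨⟨⟨sc '' (A.1 : Set X), (A.2.1.image _).isCompact⟩, A.1.nonempty.image _⟩,
   A.2.1.image _, (Set.ncard_image_le A.2.1).trans A.2.2⟩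

lemma symprod_ext {A B : SymProd X 2} (hAB : (A.1 : Set X) = (B.1 : Set X)) : A = B :=
  Subtype.ext (TopologicalSpace.NonemptyCompacts.ext hAB)

lemma mapSP_coe (A : SymProd X 2) : ((mapSP sc A).1 : Set X) = sc '' (A.1 : Set X) := rfl

lemma symprod_dist_eq (A B : SymProd X 2) :
    dist A B = hausdorffDist (A.1 : Set X) (B.1 : Set X) := by
  rw [Subtype.dist_eq, NonemptyCompacts.dist_eq]

lemma symprod_edist_ne_top (A B : SymProd X 2) :
    EMetric.hausdorffEdist (A.1 : Set X) (B.1 : Set X) ≠ ⊤ :=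
  hausdorffEdist_ne_top_of_nonempty_of_bounded A.1.nonempty B.1.nonempty
    A.1.isCompact.isBounded B.1.isCompact.isBounded

lemma avoid (p : X) (hscp : ∀ x, sc x ≠ p) (B : SymProd X 2) (s : Set X)
    (hB : (B.1 : Set X) = sc '' s) :
    ¬∃ x, (B.1 : Set X) = {x, p} := by
  rintro ⟨x, hx⟩
  have hpmem : p ∈ (B.1 : Set X) := by
    rw [hx]; exact Set.mem_insert_iff.mpr (Or.inr rfl)
  rw [hB] at hpmem
  obtain ⟨a, -, hap⟩ := hpmem
  exact hscp a hap

lemma mem_pair_iff (p : X) (B : SymProd X 2) :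
    (∃ x, (B.1 : Set X) = {x, p}) ↔ p ∈ (B.1 : Set X) := by
  constructor
  · rintro ⟨x, hx⟩; rw [hx]; exact Set.mem_insert_iff.mpr (Or.inr rfl)
  · intro hpB
    by_cases hx : ∃ a ∈ (B.1 : Set X), a ≠ p
    · obtain ⟨a, ha, hap⟩ := hx
      refine ⟨a, ?_⟩
      have hsub : ({a, p} : Set X) ⊆ (B.1 : Set X) :=
        Set.insert_subset ha (Set.singleton_subset_iff.mpr hpB)
      exact (Set.eq_of_subset_of_ncard_le hsub
        (B.2.2.trans (Set.ncard_pair hap).symm.le) B.2.1).symm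
    · push_neg at hx
      refine ⟨p, ?_⟩
      rw [Set.pair_eq_singleton]
      exact Set.eq_singleton_iff_unique_mem.mpr ⟨hpB, hx⟩

lemma closed_S (p : X) :
    IsClosed {B : SymProd X 2 | ∃ x, (B.1 : Set X) = {x, p}} := by
  have hset : {B : SymProd X 2 | ∃ x, (B.1 : Set X) = {x, p}} =
      (fun B : SymProd X 2 => infDist p (B.1 : Set X)) ⁻¹' {0} := by
    ext B
    simp only [Set.mem_setOf_eq, Set.mem_preimage, Set.mem_singleton_iff]
    rw [mem_pair_iff]
    exact B.1.isCompact.isClosed.mem_iff_infDist_zero B.1.nonempty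
  rw [hset]
  exact IsClosed.preimage
    ((lipschitz_infDist_set p).continuous.comp continuous_subtype_val) isClosed_singleton

lemma mapSP_lip (hsc : ∀ x y, dist (sc x) (sc y) ≤ dist x y) : LipschitzWith 1 (mapSP sc) := by
  refine LipschitzWith.of_dist_le_mul fun A B => ?_
  rw [NNReal.coe_one, one_mul, symprod_dist_eq, symprod_dist_eq]
  refine hausdorffDist_le_of_mem_dist hausdorffDist_nonneg ?_ ?_
  · rintro x ⟨a, ha, rfl⟩
    obtain ⟨b, hb, hdb⟩ := B.1.isCompact.exists_infDist_eq_dist B.1.nonempty a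
    refine ⟨sc b, Set.mem_image_of_mem _ hb, ?_⟩
    calc dist (sc a) (sc b) ≤ dist a b := hsc a b
      _ = infDist a (B.1 : Set X) := hdb.symm
      _ ≤ hausdorffDist (A.1 : Set X) (B.1 : Set X) :=
          infDist_le_hausdorffDist_of_mem ha (symprod_edist_ne_top A B)
  · rintro x ⟨b, hb, rfl⟩
    obtain ⟨a, ha, hda⟩ := A.1.isCompact.exists_infDist_eq_dist A.1.nonempty b
    refine ⟨sc a, Set.mem_image_of_mem _ ha, ?_⟩
    calc dist (sc b) (sc a) ≤ dist b a := hsc b a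
      _ = infDist b (A.1 : Set X) := hda.symm
      _ ≤ hausdorffDist (B.1 : Set X) (A.1 : Set X) :=
          infDist_le_hausdorffDist_of_mem hb (symprod_edist_ne_top B A)
      _ = hausdorffDist (A.1 : Set X) (B.1 : Set X) := hausdorffDist_comm

lemma mapSP_move (c : ℝ) (hc : 0 ≤ c) (hsc : ∀ x, dist (sc x) x ≤ c) (A : SymProd X 2) :
    dist (mapSP sc A) A ≤ c := by
  rw [symprod_dist_eq]
  refine hausdorffDist_le_of_mem_dist hc ?_ ?_
  · rintro x ⟨a, ha, rfl⟩
    exact ⟨a, ha, hsc a⟩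
  · intro a ha
    exact ⟨sc a, Set.mem_image_of_mem _ ha, by rw [dist_comm]; exact hsc a⟩

end aux2

theorem stmt10 [m : MetricSpace (ℕ → I)]
    (hm : ∀ x y : ℕ → I, dist x y = ∑' j, (2:ℝ)⁻¹ ^ (j+1) * |(x j : ℝ) - (y j : ℝ)|)
    (p : ℕ → I) (hp : p = fun _ => 1) (t : I) (ht : t ∈ Set.Ioo (0:I) 1)
    (h : SymProd (ℕ → I) 2 → SymProd (ℕ → I) 2)
    (hh : ∀ A, ((h A).1 : Set (ℕ → I)) = (fun x j => t * x j) '' (A.1 : Set (ℕ → I))) :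
    Continuous h ∧
    (∀ A, h A ∉ {B : SymProd (ℕ → I) 2 | ∃ x, (B.1 : Set (ℕ → I)) = {x, p}}) ∧
    (∀ A, dist (h A) A ≤ 1 - (t:ℝ)) ∧
    IsZSet {B : SymProd (ℕ → I) 2 | ∃ x, (B.1 : Set (ℕ → I)) = {x, p}} := by
  have ht1 : (t:ℝ) < 1 := ht.2
  have avoidp : ∀ (t' : I), (t':ℝ) < 1 → ∀ x : ℕ → I, (fun j => t' * x j) ≠ p := by
    intro t' ht' x hx
    have h0 : ((t' * x 0 : I) : ℝ) = 1 := by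
      have := congrFun hx 0
      rw [hp] at this
      rw [this]; rfl
    rw [Set.Icc.coe_mul] at h0
    nlinarith [(x 0).2.1, (x 0).2.2, t'.2.1, t'.2.2]
  have hfeq : h = mapSP (fun x j => t * x j) := by
    funext A
    exact symprod_ext (by rw [hh]; rfl)
  have hlip : ∀ t' : I, LipschitzWith 1 (mapSP (fun (x : ℕ → I) j => t' * x j)) :=
    fun t' => mapSP_lip _ (fun x y => by simpa using (aux_lip hm t').dist_le_mul x y)
  refine ⟨?_, ?_, ?_, ?_⟩
  · rw [hfeq]; exact (hlip t).continuous
  · intro A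
    exact avoid _ p (avoidp t ht1) (h A) _ (hh A)
  · intro A
    rw [hfeq]
    exact mapSP_move _ _ (by linarith [t.2.2]) (fun x => aux_move hm t x) A
  · refine ⟨closed_S p, ?_⟩
    intro ε hε
    have hc0 : (0:ℝ) ≤ max (1 - ε/2) 2⁻¹ := le_trans (by norm_num) (le_max_right _ _)
    have hclt : max (1 - ε/2) 2⁻¹ < 1 := max_lt (by linarith) (by norm_num)
    set t' : I := ⟨max (1 - ε/2) 2⁻¹, hc0, hclt.le⟩ with ht'
    have ht'1 : (t' : ℝ) < 1 := hclt
    refine ⟨mapSP (fun x j => t' * x j), (hlip t').continuous, ?_, ?_⟩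
    · intro B
      exact avoid _ p (avoidp t' ht'1) _ _ rfl
    · intro B
      have h1 : dist (mapSP (fun x j => t' * x j) B) B ≤ 1 - (t':ℝ) :=
        mapSP_move _ _ (by linarith) (fun x => aux_move hm t' x) B
      rw [dist_comm]
      have h2 : (1 - ε/2 : ℝ) ≤ (t' : ℝ) := le_max_left _ _
      have h3 : (t':ℝ) = max (1 - ε/2) 2⁻¹ := rfl
      calc dist (mapSP (fun x j => t' * x j) B) B ≤ 1 - (t':ℝ) := h1
        _ < ε := by rw [h3]; have := le_max_left (1 - ε/2) (2⁻¹:ℝ); linarith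
end

section
/- Let Q be a convex Hilbert cube in the Hilbert space ℓ₂ with the metric from the ℓ₂ norm, and fix p ∈ Q. For each finite nonempty K ⊆ Q, let η_p(K) be the unique point of the convex hull co(K) nearest to p. Then η_p : F_n(Q) → Q is continuous. -/
open Metric TopologicalSpace Set Filter unitInterval

/-- The Hilbert space ℓ₂ of square-summable real sequences. -/
noncomputable abbrev ellTwo := lp (fun _ : ℕ => ℝ) 2


/-!
If `x` and `y` are the points of convex sets `C` and `D` nearest to `p`, the variational
inequalities `⟪p - x, z - x⟫ ≤ 0` on `C` and `⟪p - y, w - y⟫ ≤ 0` on `D`, applied to points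
`z ∈ C`, `w ∈ D` that are `h`-close to `y` and `x`, give `‖x - y‖² ≤ h (2‖p - x‖ + h)` when
`C` and `D` are within Hausdorff distance `h`. Taking convex hulls does not increase the Hausdorff
distance, so `η` is locally `1/2`-Hölder on `F_n(Q)`.
-/

section InnerProductSpace

variable {E : Type*} [NormedAddCommGroup E] [InnerProductSpace ℝ E]

open scoped RealInnerProductSpace

theorem Convex.inner_sub_nonpos_of_isMinOn_dist {C : Set E} (hC : Convex ℝ C) {p x : E}
    (hx : x ∈ C) (hmin : IsMinOn (dist p) C x) : ∀ z ∈ C, ⟪p - x, z - x⟫ ≤ 0 := by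
  have : Nonempty C := ⟨⟨x, hx⟩⟩
  rw [← norm_eq_iInf_iff_real_inner_le_zero hC hx]
  have hbdd : BddBelow (range fun z : C => ‖p - z‖) := ⟨0, by rintro _ ⟨z, rfl⟩; positivity⟩
  refine le_antisymm (le_ciInf fun z => ?_) (ciInf_le hbdd ⟨x, hx⟩)
  simpa only [dist_eq_norm] using isMinOn_iff.1 hmin z z.2

theorem Convex.dist_sq_le_of_isMinOn_dist {C D : Set E} (hC : Convex ℝ C) (hD : Convex ℝ D)
    {p x y : E} {h : ℝ} (hx : x ∈ C) (hxmin : IsMinOn (dist p) C x) (hy : y ∈ D)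
    (hymin : IsMinOn (dist p) D y) (hCD : ∀ a ∈ C, ∃ b ∈ D, dist a b ≤ h)
    (hDC : ∀ b ∈ D, ∃ a ∈ C, dist b a ≤ h) :
    dist x y ^ 2 ≤ h * (2 * dist p x + h) := by
  obtain ⟨y', hy', hxy'⟩ := hCD x hx
  obtain ⟨x', hx', hyx'⟩ := hDC y hy
  have hpy : dist p y ≤ dist p x + h :=
    (isMinOn_iff.1 hymin y' hy').trans ((dist_triangle p x y').trans (by gcongr))
  have hsplit : dist x y ^ 2 =
      ⟪p - x, x' - x⟫ + ⟪p - x, y - x'⟫ + ⟪p - y, y' - y⟫ + ⟪p - y, x - y'⟫ := by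
    rw [dist_eq_norm, ← real_inner_self_eq_norm_sq]
    simp only [inner_sub_left, inner_sub_right, real_inner_comm]
    ring
  have h₁ := hC.inner_sub_nonpos_of_isMinOn_dist hx hxmin x' hx'
  have h₂ := hD.inner_sub_nonpos_of_isMinOn_dist hy hymin y' hy'
  have h₃ : ⟪p - x, y - x'⟫ ≤ dist p x * h := by
    grw [real_inner_le_norm, ← dist_eq_norm, ← dist_eq_norm, hyx']
  have h₄ : ⟪p - y, x - y'⟫ ≤ dist p y * h := by
    grw [real_inner_le_norm, ← dist_eq_norm, ← dist_eq_norm, hxy']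
  nlinarith [dist_nonneg (x := x) (y := y')]

end InnerProductSpace

open Pointwise in
theorem exists_dist_le_of_mem_convexHull {E : Type*} [SeminormedAddCommGroup E]
    [NormedSpace ℝ E] {A B : Set E} {h : ℝ} (hAB : ∀ a ∈ A, ∃ b ∈ B, dist a b ≤ h) {x : E}
    (hx : x ∈ convexHull ℝ A) : ∃ y ∈ convexHull ℝ B, dist x y ≤ h := by
  have hA : A ⊆ convexHull ℝ B + closedBall (0 : E) h := fun a ha => by
    obtain ⟨b, hb, hab⟩ := hAB a ha
    exact ⟨b, subset_convexHull ℝ B hb, a - b, by simpa [dist_eq_norm] using hab,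
      add_sub_cancel b a⟩
  obtain ⟨y, hy, c, hc, rfl⟩ :=
    convexHull_min hA ((convex_convexHull ℝ B).add (convex_closedBall (0 : E) h)) hx
  exact ⟨y, hy, by simpa [dist_eq_norm] using hc⟩

theorem NonemptyCompacts.exists_dist_le_dist {X : Type*} [MetricSpace X]
    {K L : NonemptyCompacts X} {a : X} (ha : a ∈ K) : ∃ b ∈ L, dist a b ≤ dist K L := by
  obtain ⟨b, hb, hab⟩ := L.isCompact.exists_infDist_eq_dist L.nonempty a
  exact ⟨b, hb, hab ▸ infDist_le_hausdorffDist_of_mem ha (edist_ne_top K L)⟩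

theorem NonemptyCompacts.exists_dist_le_dist_of_mem_convexHull {E : Type*}
    [NormedAddCommGroup E] [NormedSpace ℝ E] {Q : Set E} {K L : NonemptyCompacts Q} {x : E}
    (hx : x ∈ convexHull ℝ ((↑) '' (K : Set Q))) :
    ∃ y ∈ convexHull ℝ ((↑) '' (L : Set Q)), dist x y ≤ dist K L := by
  refine exists_dist_le_of_mem_convexHull ?_ hx
  rintro _ ⟨a, ha, rfl⟩
  obtain ⟨b, hb, hab⟩ := exists_dist_le_dist (L := L) ha
  exact ⟨b, mem_image_of_mem _ hb, hab⟩

theorem NonemptyCompacts.dist_sq_le_of_isMinOn_dist_convexHull {E : Type*}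
    [NormedAddCommGroup E] [InnerProductSpace ℝ E] {Q : Set E} {K L : NonemptyCompacts Q}
    {p x y : E} (hx : x ∈ convexHull ℝ ((↑) '' (K : Set Q)))
    (hxmin : IsMinOn (dist p) (convexHull ℝ ((↑) '' (K : Set Q))) x)
    (hy : y ∈ convexHull ℝ ((↑) '' (L : Set Q)))
    (hymin : IsMinOn (dist p) (convexHull ℝ ((↑) '' (L : Set Q))) y) :
    dist x y ^ 2 ≤ dist K L * (2 * dist p x + dist K L) :=
  (convex_convexHull ℝ _).dist_sq_le_of_isMinOn_dist (convex_convexHull ℝ _) hx hxmin hy hymin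
    (fun _ => exists_dist_le_dist_of_mem_convexHull) fun _ hb =>
      dist_comm K L ▸ exists_dist_le_dist_of_mem_convexHull hb

theorem stmt11_general (n : ℕ)
    (Q : Set ellTwo) (p : ellTwo)
    (η : SymProd Q n → Q)
    (hη : ∀ K : SymProd Q n,
      ((η K : Q) : ellTwo) ∈ convexHull ℝ (((↑) : Q → ellTwo) '' (K.1 : Set Q)) ∧
      ∀ z ∈ convexHull ℝ (((↑) : Q → ellTwo) '' (K.1 : Set Q)),
        dist p ((η K : Q) : ellTwo) ≤ dist p z) :
    Continuous η := by
  have hest (K L : SymProd Q n) :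
      dist (η L) (η K) ≤ √(dist L K * (2 * dist p (η K : ellTwo) + dist L K)) := by
    rw [dist_comm L, dist_comm (η L)]
    exact Real.le_sqrt_of_sq_le <| NonemptyCompacts.dist_sq_le_of_isMinOn_dist_convexHull
      (hη K).1 (isMinOn_iff.2 (hη K).2) (hη L).1 (isMinOn_iff.2 (hη L).2)
  refine continuous_iff_continuousAt.2 fun K => tendsto_iff_dist_tendsto_zero.2 ?_
  refine squeeze_zero (fun _ => dist_nonneg) (hest K) ?_
  have hbound : Continuous fun L => √(dist L K * (2 * dist p (η K : ellTwo) + dist L K)) := by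
    fun_prop
  simpa using hbound.tendsto K

theorem stmt11 (n : ℕ) (hn : 0 < n)
    (Q : Set ellTwo) (hconv : Convex ℝ Q) (hcomp : IsCompact Q)
    (hQ : Nonempty (Q ≃ₜ (ℕ → I))) (p : ellTwo) (hp : p ∈ Q)
    (η : SymProd Q n → Q)
    (hη : ∀ K : SymProd Q n,
      ((η K : Q) : ellTwo) ∈ convexHull ℝ (((↑) : Q → ellTwo) '' (K.1 : Set Q)) ∧
      ∀ z ∈ convexHull ℝ (((↑) : Q → ellTwo) '' (K.1 : Set Q)),
        dist p ((η K : Q) : ellTwo) ≤ dist p z) :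
    Continuous η :=
  stmt11_general n Q p η hη
end

section
/- Let Q be a convex Hilbert cube in ℓ₂, p ∈ Q, and η_p(K) the unique nearest point of co(K) to p for K ∈ F_n(Q). If {q₁,…,q_r} ∈ F_n(Q), η_p({q₁,…,q_r}) = q, and t ∈ [0,1], then η_p({(1−t)q₁+tq, …, (1−t)q_r+tq}) = q. -/
open Metric TopologicalSpace Set Filter unitInterval

theorem stmt12 (n : ℕ) (hn : 0 < n) (r : ℕ) (hr : 0 < r) (hrn : r ≤ n)
    (Q : Set ellTwo) (hconv : Convex ℝ Q) (hQ : Nonempty (Q ≃ₜ (ℕ → I)))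
    (p : ellTwo) (hp : p ∈ Q)
    (q : Fin r → ellTwo) (hq : ∀ j, q j ∈ Q) (qc : ellTwo)
    (hnear : qc ∈ convexHull ℝ (Set.range q) ∧
      ∀ z ∈ convexHull ℝ (Set.range q), dist p qc ≤ dist p z)
    (t : ℝ) (ht : t ∈ Set.Icc (0:ℝ) 1) :
    qc ∈ convexHull ℝ (Set.range fun j => (1 - t) • q j + t • qc) ∧
    ∀ z ∈ convexHull ℝ (Set.range fun j => (1 - t) • q j + t • qc),
      dist p qc ≤ dist p z := by
  obtain ⟨hmem, hmin⟩ := hnear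
  set f : ellTwo →ᵃ[ℝ] ellTwo :=
    { toFun := fun x => (1 - t) • x + t • qc
      linear := (1 - t) • LinearMap.id
      map_vadd' := by
        intro a v
        simp [smul_add]
        abel } with hf
  have hhull : convexHull ℝ (Set.range fun j => (1 - t) • q j + t • qc)
      = f '' convexHull ℝ (Set.range q) := by
    rw [AffineMap.image_convexHull, ← Set.range_comp]
    rfl
  have hfqc : f qc = qc := by
    show (1 - t) • qc + t • qc = qc
    rw [← add_smul]; simp
  refine ⟨?_, ?_⟩
  · rw [hhull]; exact ⟨qc, hmem, hfqc⟩
  · intro z hz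
    rw [hhull] at hz
    obtain ⟨z₀, hz₀, rfl⟩ := hz
    have : f z₀ ∈ convexHull ℝ (Set.range q) :=
      (convex_convexHull ℝ _) hz₀ hmem (by linarith [ht.2]) ht.1 (by ring)
    exact hmin _ this
end
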